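/- arXiv:2207.11861 — 5 statements merged into one kernel-verified Lean document; each statement's English description precedes it below -/
import Mathlib

section
/- For positive integers p and q and divisors d, e of q, the sum of C_d(a)·C_e(b) over all pairs (a,b) with 0 ≤ a,b ≤ q−1 and a+b ≡ p (mod q) equals q·C_d(p) if d = e, and equals 0 if d ≠ e, where C_d(b) = Σ_{1≤k≤d, gcd(k,d)=1} e^{2πi k b/d} is the Ramanujan sum. -/
/-- Ramanujan sum `C_d(b) = Σ_{1 ≤ k ≤ d, gcd(k,d)=1} e^{2πikb/d}`. -/
noncomputable def RamanujanSum (d : ℕ) (b : ℤ) : ℂ :=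
  ∑ k ∈ (Finset.Icc 1 d).filter (fun k => Nat.gcd k d = 1),
    Complex.exp (2 * Real.pi * Complex.I * k * b / d)

/-!
With `e(x) = exp(2πix)` we have `C_d(b) = ∑ e(kb/d)` over `1 ≤ k ≤ d` coprime to `d`. Since
both Ramanujan sums are `q`-periodic, the sum over `a + b ≡ p (mod q)` is the convolution
`∑_{a < q} C_d(a) C_e(p - a)`. Expanding, each pair `(k, l)` contributes
`e(lp/e) ∑_{a < q} e(a (k/d - l/e))`, a geometric sum of `q`-th roots of unity: it is `q·e(lp/e)`
if `k/d - l/e ∈ ℤ` and `0` otherwise. As `k/d` and `l/e` are reduced fractions in `(0, 1]`,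
`k/d - l/e ∈ ℤ` only when `d = e` and `k = l`, and the diagonal terms add up to `q·C_d(p)`.
-/

open Finset Function

noncomputable def expTwoPiI (x : ℚ) : ℂ :=
  Complex.exp (2 * Real.pi * Complex.I * x)

theorem expTwoPiI_add (x y : ℚ) : expTwoPiI (x + y) = expTwoPiI x * expTwoPiI y := by
  rw [expTwoPiI, expTwoPiI, expTwoPiI, ← Complex.exp_add, Rat.cast_add, mul_add]

theorem expTwoPiI_natCast_mul (n : ℕ) (x : ℚ) : expTwoPiI (n * x) = expTwoPiI x ^ n := by
  rw [expTwoPiI, expTwoPiI, ← Complex.exp_nat_mul]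
  push_cast
  ring_nf

theorem expTwoPiI_eq_one_iff (x : ℚ) : expTwoPiI x = 1 ↔ ∃ n : ℤ, x = n := by
  have h2πi : 2 * (Real.pi : ℂ) * Complex.I ≠ 0 := by simp [Real.pi_ne_zero]
  rw [expTwoPiI, Complex.exp_eq_one_iff]
  refine exists_congr fun n => ?_
  rw [mul_comm _ (x : ℂ), mul_left_inj' h2πi, ← Rat.cast_intCast, Rat.cast_inj]

theorem expTwoPiI_add_intCast (x : ℚ) (n : ℤ) : expTwoPiI (x + n) = expTwoPiI x := by
  rw [expTwoPiI_add, (expTwoPiI_eq_one_iff _).2 ⟨n, rfl⟩, mul_one]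

open Classical in
theorem sum_range_expTwoPiI_mul (q : ℕ) (x : ℚ) (hx : ∃ n : ℤ, q * x = n) :
    ∑ a ∈ range q, expTwoPiI (a * x) = if ∃ n : ℤ, x = n then (q : ℂ) else 0 := by
  simp_rw [expTwoPiI_natCast_mul]
  split_ifs with hint
  · simp [(expTwoPiI_eq_one_iff x).2 hint]
  · have hpow : expTwoPiI x ^ q = 1 := by
      rw [← expTwoPiI_natCast_mul, expTwoPiI_eq_one_iff]
      exact hx
    rw [geom_sum_eq (mt (expTwoPiI_eq_one_iff x).1 hint), hpow, sub_self, zero_div]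

open Classical in
theorem sum_range_expTwoPiI_mul_mul_sub (q : ℕ) (x y p : ℚ) (hx : ∃ n : ℤ, q * x = n)
    (hy : ∃ n : ℤ, q * y = n) :
    ∑ a ∈ range q, expTwoPiI (x * a) * expTwoPiI (y * (p - a)) =
      if ∃ n : ℤ, x - y = n then q * expTwoPiI (y * p) else 0 := by
  obtain ⟨m, hm⟩ := hx
  obtain ⟨n, hn⟩ := hy
  have hterm (a : ℕ) : expTwoPiI (x * a) * expTwoPiI (y * (p - a)) =
      expTwoPiI (y * p) * expTwoPiI (a * (x - y)) := by
    rw [← expTwoPiI_add, ← expTwoPiI_add]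
    ring_nf
  simp_rw [hterm, ← mul_sum]
  rw [sum_range_expTwoPiI_mul q (x - y) ⟨m - n, by push_cast; rw [mul_sub, hm, hn]⟩]
  split_ifs <;> ring

theorem exists_intCast_eq_mul_div_of_dvd {d q : ℕ} (hd : d ∣ q) (k : ℤ) :
    ∃ n : ℤ, q * (k / d : ℚ) = n := by
  obtain ⟨s, rfl⟩ := hd
  rcases eq_or_ne d 0 with rfl | hd0
  · exact ⟨0, by simp⟩
  · exact ⟨s * k, by push_cast; field_simp⟩

def reducedResidues (d : ℕ) : Finset ℕ :=
  (Icc 1 d).filter (fun k => Nat.gcd k d = 1)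

theorem mem_reducedResidues {d k : ℕ} :
    k ∈ reducedResidues d ↔ (1 ≤ k ∧ k ≤ d) ∧ k.Coprime d := by
  simp [reducedResidues, Nat.Coprime]

theorem ramanujanSum_eq (d : ℕ) (b : ℤ) :
    RamanujanSum d b = ∑ k ∈ reducedResidues d, expTwoPiI (k / d * b) := by
  refine sum_congr rfl fun k _ => ?_
  rw [expTwoPiI]
  push_cast
  ring_nf

theorem ramanujanSum_periodic (d : ℕ) : Periodic (RamanujanSum d) d := by
  intro b
  simp_rw [ramanujanSum_eq]
  refine sum_congr rfl fun k hk => ?_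
  have hd : (d : ℚ) ≠ 0 := by
    have := mem_reducedResidues.1 hk
    exact_mod_cast (by omega : d ≠ 0)
  have hshift : (k / d * (b + d : ℤ) : ℚ) = k / d * b + (k : ℤ) := by
    push_cast
    field_simp
  rw [hshift, expTwoPiI_add_intCast]

theorem ramanujanSum_periodic_of_dvd {d q : ℕ} (h : d ∣ q) : Periodic (RamanujanSum d) q := by
  obtain ⟨s, rfl⟩ := h
  rw [Nat.cast_mul, mul_comm]
  exact (ramanujanSum_periodic d).nat_mul s

theorem div_mem_Ioc_of_mem_reducedResidues {d k : ℕ} (hk : k ∈ reducedResidues d) :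
    (k / d : ℚ) ∈ Set.Ioc 0 1 := by
  obtain ⟨⟨hk1, hkd⟩, -⟩ := mem_reducedResidues.1 hk
  have hd : (0 : ℚ) < d := by exact_mod_cast (by omega : 0 < d)
  refine ⟨by positivity, ?_⟩
  rw [div_le_one hd]
  exact_mod_cast hkd

theorem exists_div_sub_div_eq_intCast_iff {d e k l : ℕ} (hk : k ∈ reducedResidues d)
    (hl : l ∈ reducedResidues e) : (∃ n : ℤ, (k / d - l / e : ℚ) = n) ↔ d = e ∧ k = l := by
  refine ⟨fun ⟨n, h⟩ => ?_, by rintro ⟨rfl, rfl⟩; exact ⟨0, by simp⟩⟩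
  have hkd := div_mem_Ioc_of_mem_reducedResidues hk
  have hle := div_mem_Ioc_of_mem_reducedResidues hl
  have hn : n = 0 := by
    have h1 : (-1 : ℚ) < n := by linarith [hkd.1, hle.2]
    have h2 : (n : ℚ) < 1 := by linarith [hkd.2, hle.1]
    have : (-1 : ℤ) < n ∧ n < 1 := ⟨by exact_mod_cast h1, by exact_mod_cast h2⟩
    omega
  subst hn
  obtain ⟨⟨hk1, hk⟩, hkc⟩ := mem_reducedResidues.1 hk
  obtain ⟨⟨hl1, hl⟩, hlc⟩ := mem_reducedResidues.1 hl
  have hfrac : ((k : ℤ) / (d : ℤ) : ℚ) = ((l : ℤ) / (e : ℤ) : ℚ) := by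
    push_cast
    linarith
  have := Rat.div_int_inj (a := k) (b := d) (c := l) (d := e) (by omega) (by omega) hkc hlc hfrac
  omega

theorem Nat.add_mod_eq_mod_iff {q p a b : ℕ} (ha : a < q) (hb : b < q) :
    (a + b) % q = p % q ↔ b = (p + q - a) % q := by
  have hsum : a + (p + q - a) ≡ p [MOD q] := by
    rw [Nat.add_sub_cancel' (by omega)]
    exact Nat.add_modEq_right
  constructor
  · intro h
    rw [← Nat.mod_eq_of_lt hb]
    exact Nat.ModEq.add_left_cancel' a (h.trans hsum.symm)
  · rintro rfl
    exact (Nat.ModEq.add_left a (Nat.mod_modEq _ q)).trans hsum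

theorem Function.Periodic.apply_emod {M : Type*} {g : ℤ → M} {q : ℤ} (hg : Periodic g q)
    (x : ℤ) : g (x % q) = g x := by
  rw [Int.emod_def, mul_comm]
  exact hg.sub_int_mul_eq _

theorem sum_filter_add_mod_eq {M : Type*} [AddCommMonoid M] (q p : ℕ) (f : ℕ → ℤ → M)
    (hf : ∀ a, Periodic (f a) q) :
    ∑ x ∈ (range q ×ˢ range q).filter (fun x => (x.1 + x.2) % q = p % q), f x.1 x.2 =
      ∑ a ∈ range q, f a (p - a) := by
  rw [sum_filter, sum_product]
  refine sum_congr rfl fun a ha => ?_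
  rw [mem_range] at ha
  rw [sum_congr rfl fun b hb => if_congr (Nat.add_mod_eq_mod_iff ha (mem_range.1 hb)) rfl rfl,
    sum_ite_eq', if_pos (mem_range.2 (Nat.mod_lt _ (by omega))), Int.natCast_mod,
    (hf a).apply_emod, Nat.cast_sub (by omega), Nat.cast_add, add_sub_right_comm]
  exact hf a _

theorem ramanujan_orthogonality_general_s0 (p q d e : ℕ)
    (hd : d ∣ q) (he : e ∣ q) :
    ∑ x ∈ (Finset.range q ×ˢ Finset.range q).filter
        (fun x => (x.1 + x.2) % q = p % q),
      RamanujanSum d x.1 * RamanujanSum e x.2 =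
    if d = e then (q : ℂ) * RamanujanSum d p else 0 := by
  rw [sum_filter_add_mod_eq q p (fun a b => RamanujanSum d a * RamanujanSum e b)
    fun a b => congrArg (RamanujanSum d a * ·) (ramanujanSum_periodic_of_dvd he b)]
  simp_rw [ramanujanSum_eq, sum_mul_sum]
  have hinner (k l : ℕ) (hk : k ∈ reducedResidues d) (hl : l ∈ reducedResidues e) :
      ∑ a ∈ range q,
          expTwoPiI (k / d * (a : ℤ)) * expTwoPiI (l / e * ((p : ℤ) - (a : ℤ) : ℤ)) =
        if d = e ∧ k = l then (q : ℂ) * expTwoPiI (l / e * p) else 0 := by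
    push_cast
    rw [sum_range_expTwoPiI_mul_mul_sub q _ _ p
      (by simpa using exists_intCast_eq_mul_div_of_dvd hd k)
      (by simpa using exists_intCast_eq_mul_div_of_dvd he l)]
    simp only [exists_div_sub_div_eq_intCast_iff hk hl]
  rw [sum_comm, sum_congr rfl fun k _ => sum_comm,
    sum_congr rfl fun k hk => sum_congr rfl fun l hl => hinner k l hk hl]
  split_ifs with hde
  · subst hde
    simp [mul_sum]
  · simp [hde]

/-- Carmichael/Cohen orthogonality for Ramanujan sums. -/
theorem ramanujan_orthogonality (p q d e : ℕ) (hp : 0 < p) (hq : 0 < q)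
    (hd : d ∣ q) (he : e ∣ q) :
    ∑ x ∈ (Finset.range q ×ˢ Finset.range q).filter
        (fun x => (x.1 + x.2) % q = p % q),
      RamanujanSum d x.1 * RamanujanSum e x.2 =
    if d = e then (q : ℂ) * RamanujanSum d p else 0 :=
  ramanujan_orthogonality_general_s0 p q d e hd he
end

section
/- For positive integers p, q, and a tuple (d_1,…,d_k) of positive integers each dividing q, the sum over all tuples (a_1,…,a_k) with 0 ≤ a_i ≤ q−1 and a_1+⋯+a_k ≡ p (mod q) of the product C_{d_1}(a_1)⋯C_{d_k}(a_k) equals q^{k−1}·C_d(p) if all d_i are equal to a common value d, and equals 0 otherwise. -/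
/-!
Write `C_d(b) = ∑ ψ (x * b)` over the elements `x` of additive order `d` in `ZMod q`, where `ψ` is
the standard additive character. Detecting the congruence `∑ aᵢ ≡ p` by a second character sum
turns the left-hand side into `q ^ (k - 1) * ∑ ψ (c * p)`, the sum running over the `c` whose order
is `dᵢ` for every `i`. Such `c` exist only when all `dᵢ` agree, and then they are exactly the
elements of order `d`.
-/

open Finset

namespace AddChar

theorem map_sum_eq_prod {A M ι : Type*} [AddCommMonoid A] [CommMonoid M] (ψ : AddChar A M)
    (s : Finset ι) (f : ι → A) : ψ (∑ i ∈ s, f i) = ∏ i ∈ s, ψ (f i) := by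
  classical
  induction s using Finset.induction_on with
  | empty => simp
  | insert i s hi ih => rw [sum_insert hi, prod_insert hi, map_add_eq_mul, ih]

variable {R R' : Type*} [CommRing R] [Fintype R] [DecidableEq R] [CommRing R'] [IsDomain R']
  {ψ : AddChar R R'}

theorem card_mul_sum_filter_eq_sum_mul_sum (hψ : ψ.IsPrimitive) {α : Type*} [Fintype α]
    (g : α → R) (s : R) (F : α → R') :
    Fintype.card R * ∑ a ∈ univ.filter (fun a => g a = s), F a =
      ∑ t, ψ (-(t * s)) * ∑ a, ψ (t * g a) * F a := by
  have hind (a : α) : ∑ t, ψ (t * (g a - s)) = if g a = s then (Fintype.card R : R') else 0 := by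
    simp only [sum_mulShift _ hψ, sub_eq_zero, Nat.cast_ite, Nat.cast_zero]
  simp_rw [mul_sum, sum_filter, ← mul_assoc, ← map_add_eq_mul]
  rw [sum_comm]
  refine sum_congr rfl fun a _ => ?_
  rw [← sum_mul, ← ite_zero_mul, ← hind]
  congr 1
  refine sum_congr rfl fun t _ => ?_
  ring_nf

theorem card_mul_sum_filter_sum_eq_card_pow_mul (hψ : ψ.IsPrimitive) {ι : Type*} [Fintype ι]
    [DecidableEq ι] (T : ι → Finset R) (s : R) :
    Fintype.card R *
        ∑ a ∈ univ.filter (fun a : ι → R => ∑ i, a i = s), ∏ i, ∑ x ∈ T i, ψ (x * a i) =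
      Fintype.card R ^ Fintype.card ι * ∑ c ∈ univ.filter (fun c => ∀ i, c ∈ T i), ψ (c * s) := by
  have hcoord (t : R) (T' : Finset R) :
      ∑ r, ∑ x ∈ T', ψ ((t + x) * r) = if -t ∈ T' then (Fintype.card R : R') else 0 := by
    rw [sum_comm]
    simp_rw [mul_comm _ (_ : R), sum_mulShift _ hψ, add_eq_zero_iff_neg_eq, Nat.cast_ite,
      Nat.cast_zero]
    exact sum_ite_eq T' (-t) fun _ => (Fintype.card R : R')
  calc _ = ∑ t, ψ (-(t * s)) * ∑ a : ι → R, ∏ i, ∑ x ∈ T i, ψ ((t + x) * a i) := by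
        rw [card_mul_sum_filter_eq_sum_mul_sum hψ]
        refine sum_congr rfl fun t _ => ?_
        congr 1
        refine sum_congr rfl fun a _ => ?_
        simp only [mul_sum, map_sum_eq_prod, ← prod_mul_distrib, add_mul, map_add_eq_mul]
    _ = ∑ t, ψ (-(t * s)) * ∏ i, ∑ r, ∑ x ∈ T i, ψ ((t + x) * r) := by
        simp_rw [Fintype.prod_sum]
    _ = ∑ t, ψ (-(t * s)) *
          if ∀ i, -t ∈ T i then (Fintype.card R : R') ^ Fintype.card ι else 0 := by
        simp_rw [hcoord, Fintype.prod_ite_zero, prod_const, card_univ]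
    _ = _ := by
        rw [mul_sum, sum_filter]
        refine Fintype.sum_equiv (Equiv.neg R) _ _ fun t => ?_
        simp [mul_comm]

end AddChar

namespace ZMod

variable {q d : ℕ} [NeZero q]

theorem addOrderOf_natCast_mul_div {j : ℕ} (hd : d ∣ q) (hj : j.Coprime d) :
    addOrderOf ((j * (q / d) : ℕ) : ZMod q) = d := by
  have hgcd : q.gcd (j * (q / d)) = q / d := by
    have h := Nat.gcd_mul_right d (q / d) j
    rwa [Nat.mul_div_cancel' hd, Nat.Coprime.gcd_eq_one hj.symm, one_mul] at h
  rw [addOrderOf_coe _ (NeZero.ne q), hgcd, Nat.div_div_self hd (NeZero.ne q)]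

theorem injOn_natCast_mul_div (hd : d ∣ q) :
    Set.InjOn (fun j : ℕ => ((j * (q / d) : ℕ) : ZMod q)) (Icc 1 d : Finset ℕ) := by
  intro j hj j' hj' h
  have hqd : q / d ≠ 0 := (Nat.div_pos (Nat.le_of_dvd (NeZero.pos q) hd)
    (Nat.pos_of_dvd_of_pos hd (NeZero.pos q))).ne'
  have hmod : j ≡ j' [MOD d] := by
    refine Nat.ModEq.mul_right_cancel' hqd ?_
    rwa [Nat.mul_div_cancel' hd, ← natCast_eq_natCast_iff]
  refine hmod.eq_of_abs_lt (abs_sub_lt_iff.mpr ?_)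
  simp only [coe_Icc, Set.mem_Icc] at hj hj'
  omega

theorem stdAddChar_natCast_mul_div_mul (hd : d ∣ q) (j : ℕ) (b : ℤ) :
    stdAddChar (((j * (q / d) : ℕ) : ZMod q) * (b : ZMod q)) =
      Complex.exp (2 * Real.pi * Complex.I * j * b / d) := by
  have hq : (q : ℂ) = d * (q / d : ℕ) := by exact_mod_cast (Nat.mul_div_cancel' hd).symm
  have hqd : ((q / d : ℕ) : ℂ) ≠ 0 :=
    right_ne_zero_of_mul (hq ▸ Nat.cast_ne_zero.mpr (NeZero.ne q))
  rw [← Int.cast_natCast, ← Int.cast_mul, stdAddChar_coe, hq]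
  congr 1
  simp only [Int.cast_mul, Int.cast_natCast, Nat.cast_mul]
  field_simp

theorem image_natCast_mul_div_eq_filter_addOrderOf (hd : d ∣ q) :
    ((Icc 1 d).filter (fun j => Nat.gcd j d = 1)).image
        (fun j : ℕ => ((j * (q / d) : ℕ) : ZMod q)) =
      univ.filter (fun x : ZMod q => addOrderOf x = d) := by
  have hcard : #((Icc 1 d).filter (fun j => Nat.gcd j d = 1)) = d.totient := by
    rw [← Nat.filter_coprime_Ico_eq_totient d 1, add_comm, Ico_add_one_right_eq_Icc]
    exact congrArg Finset.card (filter_congr fun j _ => Nat.coprime_comm)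
  refine eq_of_subset_of_card_le ?_ ?_
  · intro x hx
    obtain ⟨j, hj, rfl⟩ := mem_image.mp hx
    exact mem_filter.mpr ⟨mem_univ _, addOrderOf_natCast_mul_div hd (mem_filter.mp hj).2⟩
  · rw [card_image_of_injOn
      ((injOn_natCast_mul_div hd).mono (coe_subset.mpr (filter_subset _ _))), hcard,
      IsAddCyclic.card_addOrderOf_eq_totient (by rwa [ZMod.card])]

end ZMod

theorem ramanujanSum_eq_sum_addOrderOf_eq {q d : ℕ} [NeZero q] (hd : d ∣ q) (b : ℤ) :
    RamanujanSum d b = ∑ x : ZMod q with addOrderOf x = d, ZMod.stdAddChar (x * (b : ZMod q)) := by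
  rw [← ZMod.image_natCast_mul_div_eq_filter_addOrderOf hd,
    sum_image ((ZMod.injOn_natCast_mul_div hd).mono (coe_subset.mpr (filter_subset _ _)))]
  exact sum_congr rfl fun j _ => (ZMod.stdAddChar_natCast_mul_div_mul hd j b).symm

theorem Fin.sum_filter_sum_val_mod_eq {M ι : Type*} [AddCommMonoid M] [Fintype ι] [DecidableEq ι]
    {q : ℕ} [NeZero q] (p : ℕ) (F : (ι → ZMod q) → M) :
    ∑ a ∈ univ.filter (fun a : ι → Fin q => (∑ i, (a i : ℕ)) % q = p % q),
        F (fun i => ((a i : ℕ) : ZMod q)) =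
      ∑ a ∈ univ.filter (fun a : ι → ZMod q => ∑ i, a i = p), F a := by
  refine sum_nbij' (fun a i => ((a i : ℕ) : ZMod q)) (fun a i => ⟨(a i).val, ZMod.val_lt _⟩)
    ?_ ?_ ?_ ?_ fun _ _ => rfl
  · intro a ha
    simpa [← Nat.cast_sum, ZMod.natCast_eq_natCast_iff'] using ha
  · intro a ha
    simpa [← ZMod.natCast_eq_natCast_iff'] using ha
  · intro a _
    ext i
    simp [Nat.mod_eq_of_lt (a i).isLt]
  · intro a _
    ext i
    simp

theorem ramanujan_orthogonality_general_general (p q k : ℕ) (hq : 0 < q)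
    (hk : 1 ≤ k) (d : Fin k → ℕ) (hd : ∀ i, d i ∣ q) :
    (∀ d0 : ℕ, (∀ i, d i = d0) →
      ∑ a ∈ Finset.univ.filter
          (fun a : Fin k → Fin q => (∑ i, (a i : ℕ)) % q = p % q),
        ∏ i, RamanujanSum (d i) (a i) = (q : ℂ) ^ (k - 1) * RamanujanSum d0 p) ∧
    ((¬ ∃ d0 : ℕ, ∀ i, d i = d0) →
      ∑ a ∈ Finset.univ.filter
          (fun a : Fin k → Fin q => (∑ i, (a i : ℕ)) % q = p % q),
        ∏ i, RamanujanSum (d i) (a i) = 0) := by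
  have : NeZero q := ⟨hq.ne'⟩
  have hsum : ∑ a ∈ univ.filter (fun a : Fin k → Fin q => (∑ i, (a i : ℕ)) % q = p % q),
      ∏ i, RamanujanSum (d i) (a i) = (q : ℂ) ^ (k - 1) *
        ∑ c ∈ univ.filter (fun c : ZMod q => ∀ i, addOrderOf c = d i),
          ZMod.stdAddChar (c * (p : ZMod q)) := by
    refine mul_left_cancel₀ (Nat.cast_ne_zero.mpr hq.ne') ?_
    simp_rw [ramanujanSum_eq_sum_addOrderOf_eq (hd _), Int.cast_natCast]
    rw [Fin.sum_filter_sum_val_mod_eq p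
      (fun a => ∏ i, ∑ x : ZMod q with addOrderOf x = d i, ZMod.stdAddChar (x * a i))]
    have h := AddChar.card_mul_sum_filter_sum_eq_card_pow_mul (ZMod.isPrimitive_stdAddChar q)
      (fun i => univ.filter (fun x : ZMod q => addOrderOf x = d i)) (p : ZMod q)
    rw [ZMod.card, Fintype.card_fin] at h
    rw [h, ← mul_assoc, ← pow_succ', Nat.sub_add_cancel hk]
    simp only [mem_filter, mem_univ, true_and]
  refine ⟨fun d0 hall => ?_, fun hne => ?_⟩
  · have : Nonempty (Fin k) := ⟨⟨0, hk⟩⟩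
    rw [hsum, ramanujanSum_eq_sum_addOrderOf_eq (hall ⟨0, hk⟩ ▸ hd ⟨0, hk⟩), Int.cast_natCast]
    simp only [hall, forall_const]
  · rw [hsum, sum_eq_zero, mul_zero]
    intro c hc
    exact absurd ⟨addOrderOf c, fun i => ((mem_filter.mp hc).2 i).symm⟩ hne

/-- Multi-factor orthogonality for Ramanujan sums: the sum over tuples
`(a_1,…,a_k)` with `0 ≤ a_i ≤ q-1` and `a_1+⋯+a_k ≡ p (mod q)` of
`C_{d_1}(a_1)⋯C_{d_k}(a_k)` equals `q^{k-1}·C_d(p)` if all `d_i` equal a common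
value `d`, and `0` otherwise. -/
theorem ramanujan_orthogonality_general (p q k : ℕ) (hp : 0 < p) (hq : 0 < q)
    (hk : 1 ≤ k) (d : Fin k → ℕ) (hd : ∀ i, d i ∣ q) :
    (∀ d0 : ℕ, (∀ i, d i = d0) →
      ∑ a ∈ Finset.univ.filter
          (fun a : Fin k → Fin q => (∑ i, (a i : ℕ)) % q = p % q),
        ∏ i, RamanujanSum (d i) (a i) = (q : ℂ) ^ (k - 1) * RamanujanSum d0 p) ∧
    ((¬ ∃ d0 : ℕ, ∀ i, d i = d0) →
      ∑ a ∈ Finset.univ.filter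
          (fun a : Fin k → Fin q => (∑ i, (a i : ℕ)) % q = p % q),
        ∏ i, RamanujanSum (d i) (a i) = 0) :=
  ramanujan_orthogonality_general_general p q k hq hk d hd
end

section
/- Let G be a connected graph on vertex set [n] and let S ⊂ [n] be nonempty and proper with both G[S] and G[S̄] connected (so ∂(S) is a bond of size d(S)). Then for every integer v with g(G[S]) ≤ v ≤ g(G) − g(G[S̄]), there exists a break divisor D on G such that Σ_{i∈S} D(i) = v; in particular, the linear functional x_S attains exactly d(S) = g(G) − g(G[S]) − g(G[S̄]) + 1 distinct values on the set of break divisors of G. -/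
/-- A finite multigraph without loops. -/
structure Multigraph (V E : Type) where
  ends : E → Sym2 V
  loopless : ∀ e, ¬ (ends e).IsDiag

namespace Multigraph

variable {V E : Type}

/-- The underlying simple graph. -/
def simple (G : Multigraph V E) : SimpleGraph V where
  Adj u v := u ≠ v ∧ ∃ e, u ∈ G.ends e ∧ v ∈ G.ends e
  symm := by
    constructor
    intro u v h
    exact ⟨h.1.symm, h.2.imp fun e he => ⟨he.2, he.1⟩⟩
  loopless := by constructor; intro u h; exact h.1 rfl

/-- The simple graph using only edges from a subset `F ⊆ E`. -/
def subSimple (G : Multigraph V E) (F : Set E) : SimpleGraph V where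
  Adj u v := u ≠ v ∧ ∃ e ∈ F, u ∈ G.ends e ∧ v ∈ G.ends e
  symm := by
    constructor
    intro u v h
    exact ⟨h.1.symm, h.2.imp fun e he => ⟨he.1, he.2.2, he.2.1⟩⟩
  loopless := by constructor; intro u h; exact h.1 rfl

/-- Genus `g(G) = |E| - |V| + 1`. -/
def genus (G : Multigraph V E) [Fintype V] [Fintype E] : ℤ :=
  (Fintype.card E : ℤ) - (Fintype.card V : ℤ) + 1

/-- Edges of the induced subgraph `G[S]`. -/
def insideEdges (G : Multigraph V E) (S : Finset V) : Set E :=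
  {e | ∀ v ∈ G.ends e, v ∈ S}

/-- Genus of the induced subgraph `G[S]`. -/
noncomputable def inducedGenus (G : Multigraph V E) (S : Finset V) : ℤ :=
  ((G.insideEdges S).ncard : ℤ) - (S.card : ℤ) + 1

/-- The edge cut `∂(S)`. -/
def cutEdges (G : Multigraph V E) (S : Finset V) : Set E :=
  {e | (∃ u ∈ G.ends e, u ∈ S) ∧ ∃ v ∈ G.ends e, v ∉ S}

/-- `D` is a break divisor on `G`: an effective divisor of degree `g(G)` whose
restriction to every connected subgraph `H = (S, F)` has degree at least
`g(H) = |F| - |S| + 1`. -/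
def IsBreakDivisor (G : Multigraph V E) [Fintype V] [Fintype E]
    (D : V → ℤ) : Prop :=
  (∀ v, 0 ≤ D v) ∧ (∑ v, D v = G.genus) ∧
    ∀ (S : Finset V) (F : Set E),
      (∀ e ∈ F, ∀ v ∈ G.ends e, v ∈ S) →
      ((G.subSimple F).induce (S : Set V)).Connected →
      (F.ncard : ℤ) - (S.card : ℤ) + 1 ≤ ∑ v ∈ S, D v

end Multigraph

/-
Given a spanning tree `T` and a head `h(e) ∈ e` for every edge `e ∉ T`, the divisor with one chip
on each head is a break divisor: a connected subgraph `(A, F)` contains at most `|A| - 1` edges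
of `T`, and each of its other edges puts a chip in `A`.

Let `T` consist of spanning trees of `G[S]` and `G[S̄]` and one edge `e₀` of the bond `∂(S)`. Let
the edges of `G[S]` point into `S`, those of `G[S̄]` into `S̄`, and `k` of the remaining `d(S) - 1`
bond edges into `S`, the rest into `S̄`; the resulting break divisor has degree `g(G[S]) + k` on
`S`. Conversely the break-divisor inequalities for `G[S]` and `G[S̄]` confine the degree on `S` to
`[g(G[S]), g(G) - g(G[S̄])]`, and counting edges shows this interval has `d(S)` elements.
-/

namespace Multigraph

open Finset

variable {V E : Type} (G : Multigraph V E)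

lemma exists_mem_ends (e : E) : ∃ v, v ∈ G.ends e :=
  Sym2.ind (fun a b => ⟨a, Sym2.mem_mk_left a b⟩) (G.ends e)

lemma subSimple_insideEdges_induce (A : Finset V) :
    (G.subSimple (G.insideEdges A)).induce (A : Set V) = G.simple.induce (A : Set V) := by
  ext x y
  simp only [SimpleGraph.comap_adj, Function.Embedding.subtype_apply, subSimple, simple]
  refine ⟨fun ⟨hne, e, _, hx, hy⟩ => ⟨hne, e, hx, hy⟩, fun ⟨hne, e, hx, hy⟩ => ⟨hne, e, ?_, hx, hy⟩⟩
  intro w hw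
  rw [(Sym2.mem_and_mem_iff hne).mp ⟨hx, hy⟩, Sym2.mem_iff] at hw
  rcases hw with rfl | rfl
  exacts [mod_cast x.2, mod_cast y.2]

section Finsets

variable [Fintype E]

open Classical in
noncomputable def insideFinset (A : Finset V) : Finset E :=
  {e | ∀ v ∈ G.ends e, v ∈ A}

open Classical in
noncomputable def cutFinset (S : Finset V) : Finset E :=
  {e | (∃ u ∈ G.ends e, u ∈ S) ∧ ∃ v ∈ G.ends e, v ∉ S}

def IsForest [DecidableEq E] (T : Finset E) : Prop :=
  ∀ B : Finset V, B.Nonempty → #(T ∩ G.insideFinset B) < #B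

def IsSpanningTree [DecidableEq E] (T : Finset E) (A : Finset V) : Prop :=
  T ⊆ G.insideFinset A ∧ G.IsForest T ∧ #T + 1 = #A

variable {G} {A B S : Finset V} {e : E}

@[simp]
lemma mem_insideFinset : e ∈ G.insideFinset A ↔ ∀ v ∈ G.ends e, v ∈ A := by
  simp [insideFinset]

@[simp]
lemma mem_cutFinset :
    e ∈ G.cutFinset S ↔ (∃ u ∈ G.ends e, u ∈ S) ∧ ∃ v ∈ G.ends e, v ∉ S := by
  simp [cutFinset]

lemma exists_mem_cutFinset_of_adj {u v : V} (h : G.simple.Adj u v) (hu : u ∈ A) (hv : v ∉ A) :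
    ∃ e ∈ G.cutFinset A, v ∈ G.ends e := by
  obtain ⟨-, e, hue, hve⟩ := h
  exact ⟨e, mem_cutFinset.mpr ⟨⟨u, hue, hu⟩, v, hve, hv⟩, hve⟩

variable (G)

lemma ncard_insideEdges (A : Finset V) : (G.insideEdges A).ncard = #(G.insideFinset A) := by
  rw [← Set.ncard_coe_finset]
  congr 1
  ext e
  simp [insideEdges]

lemma ncard_cutEdges (S : Finset V) : (G.cutEdges S).ncard = #(G.cutFinset S) := by
  rw [← Set.ncard_coe_finset]
  congr 1
  ext e
  simp [cutEdges]

lemma insideFinset_empty : G.insideFinset (∅ : Finset V) = ∅ := by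
  ext e
  simpa using G.exists_mem_ends e

lemma insideFinset_mono (h : A ⊆ B) : G.insideFinset A ⊆ G.insideFinset B :=
  fun _ he => mem_insideFinset.mpr fun v hv => h (mem_insideFinset.mp he v hv)

variable {G}

lemma isForest_empty [DecidableEq E] : G.IsForest (∅ : Finset E) :=
  fun _ hB => by simpa using hB.card_pos

lemma IsForest.card_inter_insideFinset_le [DecidableEq E] {T : Finset E} (hT : G.IsForest T)
    (B : Finset V) : #(T ∩ G.insideFinset B) ≤ #B - 1 := by
  rcases B.eq_empty_or_nonempty with rfl | hB
  · simp [insideFinset_empty]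
  · have := hT B hB
    omega

lemma exists_head_mem_iff [DecidableEq E] {K : Finset E} (hK : K ⊆ G.cutFinset S) :
    ∃ head : E → V, (∀ e, head e ∈ G.ends e) ∧ ∀ e, head e ∈ S ↔ e ∈ G.insideFinset S ∪ K := by
  suffices ∀ e, ∃ v ∈ G.ends e, (v ∈ S ↔ e ∈ G.insideFinset S ∪ K) by
    choose head hhead hS using this
    exact ⟨head, hhead, hS⟩
  intro e
  by_cases heS : e ∈ G.insideFinset S
  · obtain ⟨v, hv⟩ := G.exists_mem_ends e
    exact ⟨v, hv, by simp [heS, mem_insideFinset.mp heS v hv]⟩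
  by_cases heK : e ∈ K
  · obtain ⟨⟨u, hu, huS⟩, -⟩ := mem_cutFinset.mp (hK heK)
    exact ⟨u, hu, by simp [huS, heK]⟩
  · obtain ⟨v, hv, hvS⟩ : ∃ v ∈ G.ends e, v ∉ S := by simpa using heS
    exact ⟨v, hv, by simp [hvS, heS, heK]⟩

variable (G) [DecidableEq V]

lemma insideFinset_inter [DecidableEq E] (A B : Finset V) :
    G.insideFinset (A ∩ B) = G.insideFinset A ∩ G.insideFinset B := by
  ext e
  simp [forall_and]

lemma inter_insideFinset_of_subset [DecidableEq E] {T : Finset E}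
    (hT : T ⊆ G.insideFinset A) (B : Finset V) :
    T ∩ G.insideFinset B = T ∩ G.insideFinset (B ∩ A) := by
  rw [insideFinset_inter, ← inter_assoc, inter_right_comm, inter_eq_left.mpr hT]

def treeDivisor [DecidableEq E] (T : Finset E) (head : E → V) (v : V) : ℤ :=
  #{e ∈ Tᶜ | head e = v}

lemma sum_treeDivisor [DecidableEq E] (T : Finset E) (head : E → V) (A : Finset V) :
    ∑ v ∈ A, treeDivisor T head v = #{e ∈ Tᶜ | head e ∈ A} := by
  simp only [treeDivisor]
  exact_mod_cast sum_card_fiberwise_eq_card_filter Tᶜ A head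

variable [Fintype V]

lemma disjoint_insideFinset_compl [DecidableEq E] (S : Finset V) :
    Disjoint (G.insideFinset S) (G.insideFinset Sᶜ) := by
  rw [disjoint_iff_inter_eq_empty, ← insideFinset_inter, inter_compl, insideFinset_empty]

lemma cutFinset_eq_compl [DecidableEq E] (S : Finset V) :
    G.cutFinset S = (G.insideFinset S ∪ G.insideFinset Sᶜ)ᶜ := by
  ext e
  simp [and_comm]

lemma card_eq_card_inter_insideFinset_add [DecidableEq E] (S : Finset V) (F : Finset E) :
    #F = #(F ∩ G.insideFinset S) + #(F ∩ G.insideFinset Sᶜ) + #(F ∩ G.cutFinset S) := by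
  rw [cutFinset_eq_compl, ← sdiff_eq_inter_compl, ← card_union_of_disjoint
    ((G.disjoint_insideFinset_compl S).mono inter_subset_right inter_subset_right),
    ← inter_union_distrib_left, card_inter_add_card_sdiff]

lemma disjoint_insideFinset_cutFinset [DecidableEq E] (S : Finset V) :
    Disjoint (G.insideFinset S) (G.cutFinset S) := by
  rw [cutFinset_eq_compl]
  exact disjoint_compl_right.mono_left subset_union_left

lemma intCast_card_cutFinset (S : Finset V) :
    (#(G.cutFinset S) : ℤ) = G.genus - G.inducedGenus S - G.inducedGenus Sᶜ + 1 := by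
  classical
  have hE := G.card_eq_card_inter_insideFinset_add S univ
  have hV := card_add_card_compl S
  simp only [univ_inter, card_univ] at hE
  simp only [genus, inducedGenus, ncard_insideEdges]
  omega

variable {G} [DecidableEq E]

lemma isForest_insert_union {T₁ T₂ : Finset E} (h₁ : G.IsForest T₁)
    (h₁A : T₁ ⊆ G.insideFinset A) (h₂ : G.IsForest T₂) (h₂A : T₂ ⊆ G.insideFinset Aᶜ)
    (he : e ∈ G.cutFinset A) : G.IsForest (insert e (T₁ ∪ T₂)) := by
  intro B hB
  have hT₁ := inter_insideFinset_of_subset G h₁A B ▸ h₁.card_inter_insideFinset_le (B ∩ A)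
  have hT₂ := inter_insideFinset_of_subset G h₂A B ▸ h₂.card_inter_insideFinset_le (B ∩ Aᶜ)
  have hT := union_inter_distrib_right T₁ T₂ _ ▸ card_union_le (T₁ ∩ G.insideFinset B) (T₂ ∩ _)
  have hsplit : #(B ∩ A) + #(B ∩ Aᶜ) = #B := by
    rw [← sdiff_eq_inter_compl, card_inter_add_card_sdiff]
  by_cases heB : e ∈ G.insideFinset B
  · obtain ⟨⟨u, hu, huA⟩, ⟨v, hv, hvA⟩⟩ := mem_cutFinset.mp he
    have huB := card_pos.mpr ⟨u, mem_inter.mpr ⟨mem_insideFinset.mp heB u hu, huA⟩⟩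
    have hvB := card_pos.mpr ⟨v, mem_inter.mpr ⟨mem_insideFinset.mp heB v hv, mem_compl.mpr hvA⟩⟩
    rw [insert_inter_of_mem heB]
    have := card_insert_le e ((T₁ ∪ T₂) ∩ G.insideFinset B)
    omega
  · rw [insert_inter_of_notMem heB]
    have := hB.card_pos
    omega

lemma IsSpanningTree.insert_insert {T : Finset E} {v : V}
    (hT : G.IsSpanningTree T A) (he : e ∈ G.cutFinset A) (hv : v ∈ G.ends e) (hvA : v ∉ A) :
    G.IsSpanningTree (insert e T) (insert v A) := by
  obtain ⟨hTA, hT, hcard⟩ := hT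
  obtain ⟨⟨u, hu, huA⟩, -⟩ := mem_cutFinset.mp he
  have heA : e ∈ G.insideFinset (insert v A) := by
    refine mem_insideFinset.mpr fun w hw => ?_
    rw [(Sym2.mem_and_mem_iff (ne_of_mem_of_not_mem huA hvA)).mp ⟨hu, hv⟩, Sym2.mem_iff] at hw
    rcases hw with rfl | rfl
    exacts [mem_insert_of_mem huA, mem_insert_self _ _]
  have heT : e ∉ T := fun heT => hvA (mem_insideFinset.mp (hTA heT) v hv)
  refine ⟨insert_subset heA (hTA.trans (insideFinset_mono G (subset_insert v A))), ?_, ?_⟩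
  · simpa using isForest_insert_union hT hTA isForest_empty (empty_subset _) he
  · rw [card_insert_of_notMem heT, card_insert_of_notMem hvA, hcard]

lemma exists_isSpanningTree (hS : (G.simple.induce (S : Set V)).Connected) :
    ∃ T, G.IsSpanningTree T S := by
  classical
  let grown := S.powerset.filter fun A => ∃ T, G.IsSpanningTree T A
  obtain ⟨a, haS⟩ := hS.nonempty
  have hsingleton : {a} ∈ grown :=
    mem_filter.mpr ⟨by simpa using haS, ∅, empty_subset _, isForest_empty, by simp⟩
  obtain ⟨A, hA, hmax⟩ := grown.exists_max_image card ⟨_, hsingleton⟩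
  obtain ⟨hAS, T, hT⟩ := mem_filter.mp hA
  rw [mem_powerset] at hAS
  suffices S ⊆ A from ⟨T, subset_antisymm hAS this ▸ hT⟩
  intro b hbS
  by_contra hbA
  -- a walk in `G[S]` from `A` to `b` leaves `A` along some edge, which extends `T`
  obtain ⟨a', ha'⟩ := card_pos.mp (lt_of_lt_of_le (by simp) (hmax _ hsingleton))
  obtain ⟨w⟩ := hS.preconnected ⟨a', hAS ha'⟩ ⟨b, hbS⟩
  obtain ⟨d, -, hd₁, hd₂⟩ := w.exists_boundary_dart {x | x.1 ∈ A} ha' hbA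
  obtain ⟨e, he, hve⟩ := exists_mem_cutFinset_of_adj (SimpleGraph.induce_adj.mp d.adj) hd₁ hd₂
  have hgrown : insert d.snd.1 A ∈ grown :=
    mem_filter.mpr ⟨mem_powerset.mpr (insert_subset (mod_cast d.snd.2) hAS), _,
      hT.insert_insert he hve hd₂⟩
  have := hmax _ hgrown
  rw [card_insert_of_notMem hd₂] at this
  omega

lemma exists_isSpanningTree_univ (hG : G.simple.Connected)
    (hS : (G.simple.induce (S : Set V)).Connected)
    (hSc : (G.simple.induce ((Sᶜ : Finset V) : Set V)).Connected) :
    ∃ T, G.IsSpanningTree T univ ∧ #(T ∩ G.insideFinset S) + 1 = #S ∧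
      #(T ∩ G.cutFinset S) ≤ 1 := by
  obtain ⟨T₁, h₁S, h₁, hcard₁⟩ := exists_isSpanningTree hS
  obtain ⟨T₂, h₂S, h₂, hcard₂⟩ := exists_isSpanningTree hSc
  obtain ⟨a, haS⟩ := hS.nonempty
  obtain ⟨b, hbS⟩ := hSc.nonempty
  obtain ⟨w⟩ := hG.preconnected a b
  obtain ⟨d, -, hd₁, hd₂⟩ := w.exists_boundary_dart S (mod_cast haS) (by simpa using hbS)
  obtain ⟨e, he, -⟩ := exists_mem_cutFinset_of_adj d.adj hd₁ hd₂
  have heT : e ∉ T₁ ∪ T₂ := by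
    rw [cutFinset_eq_compl, mem_compl, mem_union] at he
    exact fun h => he ((mem_union.mp h).imp (fun h => h₁S h) (fun h => h₂S h))
  set T := insert e (T₁ ∪ T₂)
  have hT : G.IsForest T := isForest_insert_union h₁ h₁S h₂ h₂S he
  have hcard : #T = #T₁ + #T₂ + 1 := by
    rw [card_insert_of_notMem heT, card_union_of_disjoint
      ((G.disjoint_insideFinset_compl S).mono h₁S h₂S)]
  have hT₁ : #T₁ ≤ #(T ∩ G.insideFinset S) :=
    card_le_card (subset_inter (subset_union_left.trans (subset_insert _ _)) h₁S)
  have hT₂ : #T₂ ≤ #(T ∩ G.insideFinset Sᶜ) :=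
    card_le_card (subset_inter (subset_union_right.trans (subset_insert _ _)) h₂S)
  have hTS := hT.card_inter_insideFinset_le S
  have hTSc := hT.card_inter_insideFinset_le Sᶜ
  have hpart := G.card_eq_card_inter_insideFinset_add S T
  have hV := card_add_card_compl S
  refine ⟨T, ⟨fun _ _ => by simp, hT, ?_⟩, by omega, by omega⟩
  rw [card_univ]
  omega

lemma isBreakDivisor_treeDivisor {T : Finset E} {head : E → V} (hT : G.IsSpanningTree T univ)
    (hhead : ∀ e, head e ∈ G.ends e) : G.IsBreakDivisor (treeDivisor T head) := by
  obtain ⟨-, hT, hcard⟩ := hT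
  refine ⟨fun v => by simp [treeDivisor], ?_, fun A F hFA hF => ?_⟩
  · rw [sum_treeDivisor, filter_true_of_mem fun _ _ => mem_univ _]
    have := card_compl_add_card T
    rw [card_univ] at hcard
    simp only [genus]
    omega
  · obtain ⟨F, rfl⟩ : ∃ F' : Finset E, (F' : Set E) = F := ⟨F.toFinite.toFinset, by simp⟩
    obtain ⟨a, ha⟩ := hF.nonempty
    have hFT : #(F ∩ T) < #A :=
      (card_le_card (inter_comm F T ▸ inter_subset_inter_left fun e he =>
        mem_insideFinset.mpr (hFA e he))).trans_lt (hT A ⟨a, ha⟩)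
    have hFT' : #(F \ T) ≤ #{e ∈ Tᶜ | head e ∈ A} := card_le_card fun e he => by
      rw [mem_sdiff] at he
      exact mem_filter.mpr ⟨mem_compl.mpr he.2, hFA e he.1 _ (hhead e)⟩
    have := card_inter_add_card_sdiff F T
    rw [Set.ncard_coe_finset, sum_treeDivisor]
    omega

lemma exists_isBreakDivisor_sum_add_card_eq {T K : Finset E} (hT : G.IsSpanningTree T univ)
    (hK : K ⊆ G.cutFinset S) (hKT : Disjoint K T) :
    ∃ D, G.IsBreakDivisor D ∧
      ∑ i ∈ S, D i + #(G.insideFinset S ∩ T) = #(G.insideFinset S) + #K := by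
  obtain ⟨head, hhead, hheadS⟩ := exists_head_mem_iff hK
  refine ⟨treeDivisor T head, isBreakDivisor_treeDivisor hT hhead, ?_⟩
  have hfilter : {e ∈ Tᶜ | head e ∈ S} = (G.insideFinset S ∪ K) \ T := by
    ext e
    simp [hheadS, and_comm]
  have hsplit := card_sdiff_add_card_inter (G.insideFinset S ∪ K) T
  rw [union_inter_distrib_right, disjoint_iff_inter_eq_empty.mp hKT, union_empty,
    card_union_of_disjoint ((G.disjoint_insideFinset_cutFinset S).mono_right hK)] at hsplit
  rw [sum_treeDivisor, hfilter]
  omega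

end Finsets

variable [Fintype V] [Fintype E] {G}

lemma IsBreakDivisor.inducedGenus_le_sum {D : V → ℤ} (hD : G.IsBreakDivisor D) {A : Finset V}
    (hA : (G.simple.induce (A : Set V)).Connected) : G.inducedGenus A ≤ ∑ i ∈ A, D i :=
  hD.2.2 A _ (fun _ he => he) (by rwa [subSimple_insideEdges_induce])

variable [DecidableEq V] {S : Finset V}

lemma IsBreakDivisor.sum_le_genus_sub_inducedGenus_compl {D : V → ℤ} (hD : G.IsBreakDivisor D)
    (hSc : (G.simple.induce ((Sᶜ : Finset V) : Set V)).Connected) :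
    ∑ i ∈ S, D i ≤ G.genus - G.inducedGenus Sᶜ := by
  have := hD.inducedGenus_le_sum hSc
  have := sum_add_sum_compl S D
  rw [hD.2.1] at this
  omega

lemma exists_isBreakDivisor_sum_eq (hG : G.simple.Connected)
    (hS : (G.simple.induce (S : Set V)).Connected)
    (hSc : (G.simple.induce ((Sᶜ : Finset V) : Set V)).Connected) {v : ℤ}
    (hv₁ : G.inducedGenus S ≤ v) (hv₂ : v ≤ G.genus - G.inducedGenus Sᶜ) :
    ∃ D, G.IsBreakDivisor D ∧ ∑ i ∈ S, D i = v := by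
  classical
  obtain ⟨T, hT, hTS, hTcut⟩ := exists_isSpanningTree_univ hG hS hSc
  rw [inter_comm] at hTS hTcut
  have hcut := G.intCast_card_cutFinset S
  have := card_inter_add_card_sdiff (G.cutFinset S) T
  obtain ⟨K, hK, hKcard⟩ :=
    exists_subset_card_eq (s := G.cutFinset S \ T) (n := (v - G.inducedGenus S).toNat) (by omega)
  obtain ⟨D, hD, hDS⟩ := exists_isBreakDivisor_sum_add_card_eq hT (hK.trans sdiff_subset)
    (disjoint_of_subset_left hK sdiff_disjoint)
  have hgS : G.inducedGenus S = #(G.insideFinset S) - #S + 1 := by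
    rw [inducedGenus, ncard_insideEdges]
  exact ⟨D, hD, by omega⟩

end Multigraph

theorem breakDivisor_cut_values_general {V E : Type} [Fintype V] [Fintype E]
    [DecidableEq V] (G : Multigraph V E) (hG : G.simple.Connected)
    (S : Finset V)
    (hconnS : (G.simple.induce (S : Set V)).Connected)
    (hconnSc : (G.simple.induce ((Sᶜ : Finset V) : Set V)).Connected) :
    (∀ v : ℤ, G.inducedGenus S ≤ v → v ≤ G.genus - G.inducedGenus Sᶜ →
      ∃ D : V → ℤ, G.IsBreakDivisor D ∧ ∑ i ∈ S, D i = v) ∧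
    {v : ℤ | ∃ D : V → ℤ, G.IsBreakDivisor D ∧ ∑ i ∈ S, D i = v}.ncard =
      (G.cutEdges S).ncard ∧
    ((G.cutEdges S).ncard : ℤ) =
      G.genus - G.inducedGenus S - G.inducedGenus Sᶜ + 1 := by
  have hvalues : {v : ℤ | ∃ D : V → ℤ, G.IsBreakDivisor D ∧ ∑ i ∈ S, D i = v} =
      Set.Icc (G.inducedGenus S) (G.genus - G.inducedGenus Sᶜ) := by
    ext v
    constructor
    · rintro ⟨D, hD, rfl⟩
      exact ⟨hD.inducedGenus_le_sum hconnS, hD.sum_le_genus_sub_inducedGenus_compl hconnSc⟩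
    · rintro ⟨hv₁, hv₂⟩
      exact Multigraph.exists_isBreakDivisor_sum_eq hG hconnS hconnSc hv₁ hv₂
  have hcut : ((G.cutEdges S).ncard : ℤ) = G.genus - G.inducedGenus S - G.inducedGenus Sᶜ + 1 :=
    G.ncard_cutEdges S ▸ G.intCast_card_cutFinset S
  refine ⟨fun _ => Multigraph.exists_isBreakDivisor_sum_eq hG hconnS hconnSc, ?_, hcut⟩
  rw [hvalues, ← Finset.coe_Icc, Set.ncard_coe_finset, Int.card_Icc]
  omega

/-- For `S` with `∂(S)` a bond, every integer `v` in
`[g(G[S]), g(G) − g(G[S̄])]` is attained as `Σ_{i∈S} D(i)` for some break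
divisor `D`; in particular the linear functional `x_S` attains exactly
`d(S) = g(G) − g(G[S]) − g(G[S̄]) + 1` distinct values on break divisors. -/
theorem breakDivisor_cut_values {V E : Type} [Fintype V] [Fintype E]
    [DecidableEq V] (G : Multigraph V E) (hG : G.simple.Connected)
    (S : Finset V) (hS : S.Nonempty) (hSne : S ≠ Finset.univ)
    (hconnS : (G.simple.induce (S : Set V)).Connected)
    (hconnSc : (G.simple.induce ((Sᶜ : Finset V) : Set V)).Connected) :
    (∀ v : ℤ, G.inducedGenus S ≤ v → v ≤ G.genus - G.inducedGenus Sᶜ →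
      ∃ D : V → ℤ, G.IsBreakDivisor D ∧ ∑ i ∈ S, D i = v) ∧
    {v : ℤ | ∃ D : V → ℤ, G.IsBreakDivisor D ∧ ∑ i ∈ S, D i = v}.ncard =
      (G.cutEdges S).ncard ∧
    ((G.cutEdges S).ncard : ℤ) =
      G.genus - G.inducedGenus S - G.inducedGenus Sᶜ + 1 :=
  breakDivisor_cut_values_general G hG S hconnS hconnSc
end

section
/- Let G be a connected graph with a spanning tree T, and for each edge e ∈ E(G)∖E(T) choose one of its two endpoints and place a chip there. Then the divisor D assigning to each vertex its number of chips is a break divisor on G. -/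
theorem SimpleGraph.Connected.exists_adj_dist_add_one_eq {V : Type} {H : SimpleGraph V}
    (hH : H.Connected) {r v : V} (hv : v ≠ r) : ∃ u, H.Adj v u ∧ H.dist u r + 1 = H.dist v r := by
  obtain ⟨p, hp⟩ := (hH v r).exists_walk_length_eq_dist
  have hp_not_nil : ¬ p.Nil := SimpleGraph.Walk.not_nil_of_ne hv
  have hadj := p.adj_snd hp_not_nil
  obtain ⟨q, hq⟩ := (hH p.snd r).exists_walk_length_eq_dist
  refine ⟨p.snd, hadj, le_antisymm ?_ ?_⟩
  · have h_tail := SimpleGraph.dist_le p.tail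
    have h_len := SimpleGraph.Walk.length_tail_add_one hp_not_nil
    omega
  · simpa [hq] using SimpleGraph.dist_le (SimpleGraph.Walk.cons hadj q)

theorem Set.sum_ncard_fiber_eq {α β : Type*} [Finite α] (p : α → Prop)
    (f : α → β) (S : Finset β) :
    ∑ b ∈ S, {a | p a ∧ f a = b}.ncard = {a | p a ∧ f a ∈ S}.ncard := by
  classical
  have := Fintype.ofFinite α
  simp only [Set.ncard_eq_toFinset_card', Set.toFinset_ofPred]
  rw [Finset.card_eq_sum_card_fiberwise (f := f) (t := S)
    fun a ha => (Finset.mem_filter.1 ha).2.2]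
  refine Finset.sum_congr rfl fun b _ => ?_
  rw [Finset.filter_filter]
  exact congrArg Finset.card (Finset.filter_congr fun a _ => by grind)

namespace Multigraph

variable {V E : Type} (G : Multigraph V E)

theorem card_sub_card_le_ncard_diff_insideEdges [Fintype V] [Finite E] {T : Set E}
    (hT : (G.subSimple T).Connected) {S : Finset V} {r : V} (hr : r ∈ S) :
    Fintype.card V - S.card ≤ (T \ G.insideEdges S).ncard := by
  classical
  set H := G.subSimple T
  have parent : ∀ v : {v // v ∉ S}, ∃ e ∈ T \ G.insideEdges S, ∃ u,
      G.ends e = s(v.1, u) ∧ H.dist u r + 1 = H.dist v r := by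
    rintro ⟨v, hv⟩
    obtain ⟨u, ⟨hne, e, heT, hve, hue⟩, hu⟩ :=
      hT.exists_adj_dist_add_one_eq (ne_of_mem_of_not_mem hr hv).symm
    exact ⟨e, ⟨heT, fun hin => hv (hin v hve)⟩, u, (Sym2.mem_and_mem_iff hne).1 ⟨hve, hue⟩, hu⟩
  choose e he u hends hdist using parent
  have he_inj : Function.Injective e := by
    intro a b hab
    have hab' := (hends a).symm.trans (hab ▸ hends b)
    rcases Sym2.eq_iff.1 hab' with ⟨h, -⟩ | ⟨h₁, h₂⟩
    · exact Subtype.ext h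
    · have ha := hdist a
      rw [h₂, h₁] at ha
      have := hdist b
      omega
  calc Fintype.card V - S.card = Nat.card {v // v ∉ S} := by
        simp [Nat.card_eq_fintype_card, Fintype.card_subtype_compl, Fintype.card_coe]
    _ ≤ Nat.card (T \ G.insideEdges S : Set E) :=
        Nat.card_le_card_of_injective (fun v => ⟨e v, he v⟩)
          fun a b h => he_inj (congrArg Subtype.val h)
    _ = (T \ G.insideEdges S).ncard := rfl

theorem ncard_inter_insideEdges_add_one_le [Fintype V] [Finite E] {T : Set E}
    (hT : (G.subSimple T).Connected) (hTcard : T.ncard = Fintype.card V - 1)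
    {S : Finset V} (hS : S.Nonempty) : (T ∩ G.insideEdges S).ncard + 1 ≤ S.card := by
  obtain ⟨r, hr⟩ := hS
  have h_outside := G.card_sub_card_le_ncard_diff_insideEdges hT hr
  have h_split := Set.ncard_inter_add_ncard_sdiff_eq_ncard T (G.insideEdges S)
  have hS_le := S.card_le_univ
  have hS_pos := S.card_pos.2 ⟨r, hr⟩
  omega

theorem ncard_diff_le_sum_chips [Finite E] {T F : Set E} {S : Finset V} (c : E → V)
    (hc : ∀ e ∉ T, c e ∈ G.ends e) (hF : F ⊆ G.insideEdges S) :
    (F \ T).ncard ≤ ∑ v ∈ S, {e | e ∉ T ∧ c e = v}.ncard := by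
  rw [Set.sum_ncard_fiber_eq]
  exact Set.ncard_le_ncard fun e he => ⟨he.2, hF he.1 _ (hc e he.2)⟩

end Multigraph

theorem chips_give_break_divisor_general {V E : Type} [Fintype V] [Fintype E]
    (G : Multigraph V E)
    (T : Set E)
    (hTconn : (G.subSimple T).Connected)
    (hTcard : T.ncard = Fintype.card V - 1)
    (c : E → V) (hc : ∀ e ∉ T, c e ∈ G.ends e) :
    G.IsBreakDivisor (fun v => ({e | e ∉ T ∧ c e = v}.ncard : ℤ)) := by
  have : Nonempty V := hTconn.nonempty
  refine ⟨fun v => Int.natCast_nonneg _, ?_, fun S F hF hconn => ?_⟩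
  · have hsum : ∑ v, {e | e ∉ T ∧ c e = v}.ncard = Tᶜ.ncard := by
      simpa [Set.compl_def] using Set.sum_ncard_fiber_eq (· ∉ T) c Finset.univ
    have hT_split : Tᶜ.ncard + T.ncard = Fintype.card E := by
      rw [Set.ncard_compl_add_ncard, Nat.card_eq_fintype_card]
    have hV_pos := Fintype.card_pos (α := V)
    unfold Multigraph.genus
    push_cast [← Nat.cast_sum, hsum]
    omega
  · obtain ⟨⟨r, hr⟩⟩ := hconn.nonempty
    have h_tree : (T ∩ G.insideEdges S).ncard + 1 ≤ S.card :=
      G.ncard_inter_insideEdges_add_one_le hTconn hTcard ⟨r, hr⟩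
    have h_tree_F : (F ∩ T).ncard ≤ (T ∩ G.insideEdges S).ncard :=
      Set.ncard_le_ncard fun e he => ⟨he.2, hF e he.1⟩
    have h_chips := G.ncard_diff_le_sum_chips c hc hF
    have h_split := Set.ncard_inter_add_ncard_sdiff_eq_ncard F T
    push_cast [← Nat.cast_sum]
    omega

/-- Given a spanning tree `T` of a connected multigraph `G` and, for each
non-tree edge, a choice of one of its endpoints ("placing a chip"), the divisor
counting chips at each vertex is a break divisor. -/
theorem chips_give_break_divisor {V E : Type} [Fintype V] [Fintype E]
    (G : Multigraph V E) (hG : G.simple.Connected)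
    (T : Set E)
    (hTconn : (G.subSimple T).Connected)
    (hTcard : T.ncard = Fintype.card V - 1)
    (c : E → V) (hc : ∀ e ∉ T, c e ∈ G.ends e) :
    G.IsBreakDivisor (fun v => ({e | e ∉ T ∧ c e = v}.ncard : ℤ)) :=
  chips_give_break_divisor_general G T hTconn hTcard c hc
end

section
/- Let Y ⊂ ℚ^n be a finite set of points stable under the action of a finite subgroup 𝒢 of GL_n(ℚ). Let I(Y) be the vanishing ideal of Y in ℚ[x_1,…,x_n] and let T(Y) be the ideal generated by the top-degree homogeneous components τ(f) of all nonzero f ∈ I(Y). Then ℚ[x_1,…,x_n]/T(Y) is isomorphic to the permutation module ℚ[Y] as an (ungraded) 𝒢-module; in particular dim_ℚ(ℚ[x_1,…,x_n]/T(Y)) = |Y|. -/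
open MvPolynomial

/-- The vanishing ideal `I(Y)` of a point set `Y ⊆ ℚⁿ`. -/
noncomputable def vanishingIdeal (n : ℕ) (Y : Set (Fin n → ℚ)) :
    Ideal (MvPolynomial (Fin n) ℚ) where
  carrier := {f | ∀ y ∈ Y, eval y f = 0}
  add_mem' := by
    intro a b ha hb y hy
    simp [map_add, ha y hy, hb y hy]
  zero_mem' := by intro y hy; simp
  smul_mem' := by
    intro c a ha y hy
    simp [smul_eq_mul, map_mul, ha y hy]

/-- The orbit harmonics ideal `T(Y)`, generated by top-degree homogeneous
components `τ(f)` of nonzero elements `f ∈ I(Y)`. -/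
noncomputable def topDegreeIdeal (n : ℕ) (Y : Set (Fin n → ℚ)) :
    Ideal (MvPolynomial (Fin n) ℚ) :=
  Ideal.span {g | ∃ f ∈ vanishingIdeal n Y, f ≠ 0 ∧
    g = homogeneousComponent f.totalDegree f}

/-- Linear substitution action of a matrix `M` on polynomials:
`x_i ↦ Σ_j M_{ij} x_j`, so that `(polyAct M f)(y) = f(My)`. -/
noncomputable def polyAct (n : ℕ) (M : Matrix (Fin n) (Fin n) ℚ)
    (f : MvPolynomial (Fin n) ℚ) : MvPolynomial (Fin n) ℚ :=
  aeval (fun i => ∑ j, C (M i j) * X j) f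

open scoped Matrix

/-!
Let `F_d ⊆ ℚ^Y` be the space of functions on `Y` given by polynomials of degree `< d`. A
homogeneous `f` of degree `d` lies in `T(Y)` exactly when `f|_Y ∈ F_d`: if `f|_Y = u|_Y` with
`deg u < d`, then `f = τ(f - u)`; conversely this property holds for the generators `τ(g)`, since
`τ(g) ≡ τ(g) - g` on `Y`, and it is stable under multiplication. Thus `ℚ[x]/T(Y)` is the associated
graded of the filtration `F_d` of `ℚ^Y`. Splitting the filtration by the standard inner product, let
`π_d` be the orthogonal projection onto `F_{d+1} ⊖ F_d`; then `f ↦ ∑_d π_d (f_d|_Y)` is onto `ℚ^Y`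
with kernel `T(Y)`. Every permutation of `Y` preserves the inner product, and those coming from `𝒢`
preserve each `F_d`, so they commute with the `π_d` and the map is `𝒢`-equivariant.
-/

section DotProductProjection

variable {ι K : Type*} [Fintype ι] [Field K] {W : Submodule K (ι → K)} {v : ι → K}

noncomputable def dotOrthogonal (W : Submodule K (ι → K)) : Submodule K (ι → K) :=
  LinearMap.BilinForm.orthogonal (dotProductBilin K K) W

lemma mem_dotOrthogonal : v ∈ dotOrthogonal W ↔ ∀ w ∈ W, w ⬝ᵥ v = 0 := by
  simp [dotOrthogonal, LinearMap.BilinForm.mem_orthogonal_iff]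

lemma dotOrthogonal_antitone : Antitone (dotOrthogonal (ι := ι) (K := K)) :=
  fun _ _ h => LinearMap.BilinForm.orthogonal_le h

lemma funLeft_mem_dotOrthogonal (σ : Equiv.Perm ι)
    (hW : W ∈ Module.End.invtSubmodule (LinearMap.funLeft K K σ.symm))
    (hv : v ∈ dotOrthogonal W) : LinearMap.funLeft K K σ v ∈ dotOrthogonal W := by
  refine mem_dotOrthogonal.mpr fun w hw => ?_
  simpa [LinearMap.funLeft, ← comp_equiv_symm_dotProduct] using mem_dotOrthogonal.mp hv _ (hW hw)

variable [LinearOrder K] [IsStrictOrderedRing K]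

lemma isCompl_dotOrthogonal (W : Submodule K (ι → K)) : IsCompl W (dotOrthogonal W) := by
  refine (LinearMap.BilinForm.isCompl_orthogonal_iff_disjoint
    (B := dotProductBilin K K) fun v w h => ?_).mpr ?_
  · simpa [dotProduct_comm] using h
  · refine Submodule.disjoint_def.mpr fun v hvW hv => ?_
    exact dotProduct_self_eq_zero.mp (mem_dotOrthogonal.mp hv v hvW)

noncomputable def dotProj (W : Submodule K (ι → K)) : (ι → K) →ₗ[K] (ι → K) :=
  W.projection _ (isCompl_dotOrthogonal W)

lemma dotProj_mem (W : Submodule K (ι → K)) (v : ι → K) : dotProj W v ∈ W :=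
  Submodule.projection_apply_mem _ v

lemma dotProj_eq_self (hv : v ∈ W) : dotProj W v = v :=
  Submodule.projection_apply_of_mem_left _ hv

lemma dotProj_eq_zero (hv : v ∈ dotOrthogonal W) : dotProj W v = 0 :=
  Submodule.projection_apply_of_mem_right _ hv

lemma sub_dotProj_mem_dotOrthogonal (W : Submodule K (ι → K)) (v : ι → K) :
    v - dotProj W v ∈ dotOrthogonal W :=
  Submodule.sub_projection_mem _ v

lemma commute_dotProj_funLeft (σ : Equiv.Perm ι)
    (hW : W ∈ Module.End.invtSubmodule (LinearMap.funLeft K K σ))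
    (hW' : W ∈ Module.End.invtSubmodule (LinearMap.funLeft K K σ.symm)) :
    Commute (dotProj W) (LinearMap.funLeft K K σ) := by
  refine (LinearMap.IsIdempotentElem.commute_iff
    (Submodule.isIdempotentElem_projection _)).mpr ⟨?_, ?_⟩
  · rwa [Submodule.range_projection]
  · rw [Submodule.ker_projection]
    exact fun v hv => funLeft_mem_dotOrthogonal σ hW' hv

end DotProductProjection

section GradedProjection

variable {ι K : Type*} [Fintype ι] [Field K] [LinearOrder K] [IsStrictOrderedRing K]
  {E : ℕ → Submodule K (ι → K)} {v : ι → K}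

noncomputable def gradedProj (E : ℕ → Submodule K (ι → K)) (d : ℕ) : (ι → K) →ₗ[K] (ι → K) :=
  dotProj (E (d + 1)) - dotProj (E d)

lemma gradedProj_mem (hE : Monotone E) (d : ℕ) (v : ι → K) : gradedProj E d v ∈ E (d + 1) :=
  sub_mem (dotProj_mem _ v) (hE d.le_succ (dotProj_mem _ v))

lemma gradedProj_mem_dotOrthogonal (hE : Monotone E) (d : ℕ) (v : ι → K) :
    gradedProj E d v ∈ dotOrthogonal (E d) := by
  have h := sub_mem (sub_dotProj_mem_dotOrthogonal (E d) v)
    (dotOrthogonal_antitone (hE d.le_succ) (sub_dotProj_mem_dotOrthogonal (E (d + 1)) v))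
  rwa [sub_sub_sub_cancel_left] at h

lemma gradedProj_apply (d : ℕ) (v : ι → K) :
    gradedProj E d v = dotProj (E (d + 1)) v - dotProj (E d) v := rfl

lemma gradedProj_eq_zero_of_mem (hE : Monotone E) {d : ℕ} (hv : v ∈ E d) :
    gradedProj E d v = 0 := by
  rw [gradedProj_apply, dotProj_eq_self hv, dotProj_eq_self (hE d.le_succ hv), sub_self]

lemma gradedProj_eq_zero_of_mem_dotOrthogonal (hE : Monotone E) {d : ℕ}
    (hv : v ∈ dotOrthogonal (E (d + 1))) : gradedProj E d v = 0 := by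
  rw [gradedProj_apply, dotProj_eq_zero hv,
    dotProj_eq_zero (dotOrthogonal_antitone (hE d.le_succ) hv), sub_self]

lemma gradedProj_eq_self {d : ℕ} (hv : v ∈ E (d + 1)) (hv' : v ∈ dotOrthogonal (E d)) :
    gradedProj E d v = v := by
  rw [gradedProj_apply, dotProj_eq_self hv, dotProj_eq_zero hv', sub_zero]

lemma sub_gradedProj_mem {d : ℕ} (hv : v ∈ E (d + 1)) : v - gradedProj E d v ∈ E d := by
  rw [gradedProj_apply, dotProj_eq_self hv, sub_sub_cancel]
  exact dotProj_mem (E d) v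

lemma gradedProj_gradedProj (hE : Monotone E) (d e : ℕ) (v : ι → K) :
    gradedProj E e (gradedProj E d v) = if d = e then gradedProj E d v else 0 := by
  split_ifs with hde
  · subst hde
    exact gradedProj_eq_self (gradedProj_mem hE d v) (gradedProj_mem_dotOrthogonal hE d v)
  obtain hde | hed := Nat.lt_or_gt_of_ne hde
  · exact gradedProj_eq_zero_of_mem hE (hE hde (gradedProj_mem hE d v))
  · exact gradedProj_eq_zero_of_mem_dotOrthogonal hE
      (dotOrthogonal_antitone (hE hed) (gradedProj_mem_dotOrthogonal hE d v))

lemma commute_gradedProj_funLeft (σ : Equiv.Perm ι)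
    (hE : ∀ d, E d ∈ Module.End.invtSubmodule (LinearMap.funLeft K K σ))
    (hE' : ∀ d, E d ∈ Module.End.invtSubmodule (LinearMap.funLeft K K σ.symm)) (d : ℕ) :
    Commute (gradedProj E d) (LinearMap.funLeft K K σ) :=
  (commute_dotProj_funLeft σ (hE _) (hE' _)).sub_left (commute_dotProj_funLeft σ (hE _) (hE' _))

end GradedProjection

namespace MvPolynomial

variable {σ R : Type*} [CommRing R]

attribute [local instance] MvPolynomial.gradedAlgebra in
lemma homogeneousComponent_mul_of_isHomogeneous_left {p : MvPolynomial σ R} {a : ℕ}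
    (hp : p.IsHomogeneous a) (q : MvPolynomial σ R) (d : ℕ) :
    homogeneousComponent d (p * q) = if a ≤ d then p * homogeneousComponent (d - a) q else 0 := by
  rw [← decomposition.decompose'_apply, ← decomposition.decompose'_apply]
  exact DirectSum.coe_decompose_mul_of_left_mem (𝒜 := homogeneousSubmodule σ R) d hp

lemma totalDegree_eq_of_homogeneousComponent_ne_zero {p : MvPolynomial σ R} {d : ℕ}
    (hp : p.totalDegree ≤ d) (h : homogeneousComponent d p ≠ 0) : p.totalDegree = d :=
  hp.antisymm (not_lt.mp fun hlt => h (homogeneousComponent_eq_zero _ _ hlt))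

lemma sum_range_homogeneousComponent {p : MvPolynomial σ R} {D : ℕ} (hp : p.totalDegree < D) :
    ∑ e ∈ Finset.range D, homogeneousComponent e p = p := by
  rw [← Finset.sum_range_add_sum_Ico _ hp, sum_homogeneousComponent, add_eq_left]
  exact Finset.sum_eq_zero fun e he =>
    homogeneousComponent_eq_zero _ _ (Finset.mem_Ico.mp he).1

lemma exists_eval_eq_one_eq_zero {K : Type*} [Field K] {y z : σ → K} (h : z ≠ y) :
    ∃ p : MvPolynomial σ K, eval y p = 1 ∧ eval z p = 0 := by
  obtain ⟨i, hi⟩ := Function.ne_iff.mp h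
  exact ⟨C (y i - z i)⁻¹ * (X i - C (z i)), by simp [sub_ne_zero.mpr hi.symm], by simp⟩

end MvPolynomial

section EvalDegreeLT

variable {σ K : Type*} [Field K] (Y : Set (σ → K))

noncomputable def evalOn : MvPolynomial σ K →ₐ[K] (Y → K) :=
  AlgHom.pi fun y => aeval (y : σ → K)

@[simp] lemma evalOn_apply (f : MvPolynomial σ K) (y : Y) : evalOn Y f y = eval (y : σ → K) f := by
  simp [evalOn]

noncomputable def evalDegreeLT : ℕ → Submodule K (Y → K)
  | 0 => ⊥
  | d + 1 => (restrictTotalDegree σ K d).map (evalOn Y).toLinearMap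

variable {Y}

lemma evalDegreeLT_mono : Monotone (evalDegreeLT Y) := by
  rintro (_ | d) (_ | e) hde
  · exact le_rfl
  · exact bot_le
  · omega
  · refine Submodule.map_mono fun f hf => ?_
    rw [mem_restrictTotalDegree] at hf ⊢
    omega

lemma mem_evalDegreeLT_succ {d : ℕ} {v : Y → K} :
    v ∈ evalDegreeLT Y (d + 1) ↔ ∃ f : MvPolynomial σ K, f.totalDegree ≤ d ∧ evalOn Y f = v := by
  simp [evalDegreeLT, mem_restrictTotalDegree]

lemma evalOn_mem_evalDegreeLT {f : MvPolynomial σ K} {d : ℕ} (hf : f.totalDegree < d) :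
    evalOn Y f ∈ evalDegreeLT Y d := by
  obtain ⟨d, rfl⟩ := Nat.exists_eq_add_one_of_ne_zero (Nat.ne_zero_of_lt hf)
  exact mem_evalDegreeLT_succ.mpr ⟨f, Nat.lt_succ_iff.mp hf, rfl⟩

lemma evalOn_homogeneousComponent_mem (f : MvPolynomial σ K) (d : ℕ) :
    evalOn Y (homogeneousComponent d f) ∈ evalDegreeLT Y (d + 1) :=
  evalOn_mem_evalDegreeLT
    (Nat.lt_succ_of_le (homogeneousComponent_isHomogeneous d f).totalDegree_le)

lemma exists_evalOn_eq_of_mem_evalDegreeLT {d : ℕ} {v : Y → K} (hv : v ∈ evalDegreeLT Y d) :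
    ∃ u : MvPolynomial σ K, u.totalDegree ≤ d ∧ homogeneousComponent d u = 0 ∧ evalOn Y u = v := by
  cases d with
  | zero => exact ⟨0, by simp, by simp, by simpa [evalDegreeLT] using hv.symm⟩
  | succ d =>
    obtain ⟨u, hu, rfl⟩ := mem_evalDegreeLT_succ.mp hv
    exact ⟨u, by omega, homogeneousComponent_eq_zero _ _ (by omega), rfl⟩

lemma evalOn_mul_mem_evalDegreeLT {q : MvPolynomial σ K} {a b : ℕ} (hq : q.totalDegree ≤ a)
    {v : Y → K} (hv : v ∈ evalDegreeLT Y b) : evalOn Y q * v ∈ evalDegreeLT Y (a + b) := by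
  cases b with
  | zero => simp_all [evalDegreeLT]
  | succ b =>
    obtain ⟨u, hu, rfl⟩ := mem_evalDegreeLT_succ.mp hv
    rw [← map_mul]
    exact evalOn_mem_evalDegreeLT ((totalDegree_mul q u).trans_lt (by omega))

lemma evalOn_surjective [Finite Y] : Function.Surjective (evalOn Y) := by
  classical
  have := Fintype.ofFinite Y
  have hsep (y z : Y) : ∃ p : MvPolynomial σ K, eval (y : σ → K) p = 1 ∧
      (z ≠ y → eval (z : σ → K) p = 0) := by
    by_cases hzy : z = y
    · exact ⟨1, by simp, fun h => (h hzy).elim⟩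
    · obtain ⟨p, hp⟩ := exists_eval_eq_one_eq_zero (Subtype.coe_injective.ne hzy)
      exact ⟨p, hp.1, fun _ => hp.2⟩
  choose p hp using hsep
  have hind (y z : Y) : eval (z : σ → K) (∏ w, p y w) = if z = y then 1 else 0 := by
    split_ifs with hzy
    · simp [map_prod, hzy, (hp _ _).1]
    · exact (map_prod _ _ _).trans (Finset.prod_eq_zero (Finset.mem_univ z) ((hp y z).2 hzy))
  intro v
  refine ⟨∑ y, C (v y) * ∏ w, p y w, funext fun z => ?_⟩
  simp [hind]

lemma exists_evalDegreeLT_eq_top [Finite Y] : ∃ D, evalDegreeLT Y D = ⊤ := by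
  obtain ⟨D, hD⟩ := monotone_stabilizes_iff_noetherian.mpr inferInstance
    ⟨evalDegreeLT Y, evalDegreeLT_mono⟩
  refine ⟨D, eq_top_iff.mpr fun v _ => ?_⟩
  obtain ⟨f, rfl⟩ := evalOn_surjective v
  rw [show evalDegreeLT Y D = _ from hD _ (le_max_left D (f.totalDegree + 1))]
  exact evalDegreeLT_mono (le_max_right _ _) (evalOn_mem_evalDegreeLT (Nat.lt_succ_self _))

end EvalDegreeLT

section TopDegreeIdeal

variable {n : ℕ} {Y : Set (Fin n → ℚ)} {f g : MvPolynomial (Fin n) ℚ}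

lemma mem_vanishingIdeal_iff_evalOn_eq_zero : f ∈ vanishingIdeal n Y ↔ evalOn Y f = 0 := by
  show (∀ y ∈ Y, eval y f = 0) ↔ _
  simp [funext_iff]

lemma homogeneousComponent_mem_topDegreeIdeal (hg : g ∈ vanishingIdeal n Y) {d : ℕ}
    (hd : g.totalDegree ≤ d) : homogeneousComponent d g ∈ topDegreeIdeal n Y := by
  by_cases h : homogeneousComponent d g = 0
  · rw [h]
    exact zero_mem _
  obtain rfl := totalDegree_eq_of_homogeneousComponent_ne_zero hd h
  exact Ideal.subset_span ⟨g, hg, fun h0 => h (by simp [h0]), rfl⟩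

lemma mem_topDegreeIdeal_of_isHomogeneous {d : ℕ} (hf : f.IsHomogeneous d)
    (h : evalOn Y f ∈ evalDegreeLT Y d) : f ∈ topDegreeIdeal n Y := by
  obtain ⟨u, hu, hud, hev⟩ := exists_evalOn_eq_of_mem_evalDegreeLT h
  have hfu : f - u ∈ vanishingIdeal n Y := by
    rw [mem_vanishingIdeal_iff_evalOn_eq_zero, map_sub, hev, sub_self]
  have := homogeneousComponent_mem_topDegreeIdeal hfu
    ((totalDegree_sub f u).trans (max_le hf.totalDegree_le hu))
  rwa [map_sub, hud, sub_zero, homogeneousComponent_eq_self hf] at this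

lemma evalOn_homogeneousComponent_totalDegree_mem (hg : g ∈ vanishingIdeal n Y) :
    evalOn Y (homogeneousComponent g.totalDegree g) ∈ evalDegreeLT Y g.totalDegree := by
  have hsum := sum_homogeneousComponent g
  rw [Finset.sum_range_succ] at hsum
  have htop : evalOn Y (homogeneousComponent g.totalDegree g) =
      -∑ i ∈ Finset.range g.totalDegree, evalOn Y (homogeneousComponent i g) := by
    rw [eq_neg_iff_add_eq_zero, add_comm, ← map_sum, ← map_add, hsum,
      mem_vanishingIdeal_iff_evalOn_eq_zero.mp hg]
  rw [htop]
  exact neg_mem (sum_mem fun i hi =>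
    evalDegreeLT_mono (Finset.mem_range.mp hi) (evalOn_homogeneousComponent_mem g i))

lemma evalOn_homogeneousComponent_mem_of_mem_topDegreeIdeal (hf : f ∈ topDegreeIdeal n Y)
    (d : ℕ) : evalOn Y (homogeneousComponent d f) ∈ evalDegreeLT Y d := by
  induction hf using Submodule.span_induction generalizing d with
  | mem x hx =>
    obtain ⟨g, hg, -, rfl⟩ := hx
    rw [homogeneousComponent_of_mem (homogeneousComponent_mem _ g)]
    split_ifs with h
    · subst h
      exact evalOn_homogeneousComponent_totalDegree_mem hg
    · simp
  | zero => simp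
  | add x y _ _ hx hy =>
    rw [map_add, map_add]
    exact add_mem (hx d) (hy d)
  | smul r x _ hx =>
    rw [smul_eq_mul, ← sum_homogeneousComponent r, Finset.sum_mul, map_sum, map_sum]
    refine sum_mem fun a _ => ?_
    have hra := homogeneousComponent_isHomogeneous a r
    rw [homogeneousComponent_mul_of_isHomogeneous_left hra]
    split_ifs with had
    · have := evalOn_mul_mem_evalDegreeLT hra.totalDegree_le (hx (d - a))
      rwa [← map_mul, Nat.add_sub_cancel' had] at this
    · simp

end TopDegreeIdeal

section PolyAct

variable {n : ℕ} (M : Matrix (Fin n) (Fin n) ℚ)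

lemma eval_polyAct (f : MvPolynomial (Fin n) ℚ) (y : Fin n → ℚ) :
    eval y (polyAct n M f) = eval (M *ᵥ y) f := by
  rw [polyAct, aeval_def, algebraMap_eq, ← eval_assoc]
  congr 2 with i
  simp [Matrix.mulVec, dotProduct]

lemma isHomogeneous_polyAct {f : MvPolynomial (Fin n) ℚ} {d : ℕ} (hf : f.IsHomogeneous d) :
    (polyAct n M f).IsHomogeneous d := by
  have := hf.aeval (fun i => ∑ j, C (M i j) * X j) fun i =>
    IsHomogeneous.sum _ _ _ fun j _ => (isHomogeneous_X ℚ j).C_mul (M i j)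
  rwa [one_mul] at this

lemma sum_polyAct_homogeneousComponent (f : MvPolynomial (Fin n) ℚ) :
    ∑ e ∈ Finset.range (f.totalDegree + 1), polyAct n M (homogeneousComponent e f) =
      polyAct n M f := by
  simp only [polyAct]
  rw [← map_sum, sum_homogeneousComponent]

lemma homogeneousComponent_polyAct (f : MvPolynomial (Fin n) ℚ) (d : ℕ) :
    homogeneousComponent d (polyAct n M f) = polyAct n M (homogeneousComponent d f) := by
  have hhom (e : ℕ) := isHomogeneous_polyAct M (homogeneousComponent_isHomogeneous e f)
  rw [← sum_polyAct_homogeneousComponent, map_sum, Finset.sum_eq_single d]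
  · exact homogeneousComponent_eq_self (hhom d)
  · exact fun e _ hed => by rw [homogeneousComponent_of_mem (hhom e), if_neg hed.symm]
  · intro hd
    rw [homogeneousComponent_eq_zero d f (by simpa using hd)]
    simp [polyAct]

lemma totalDegree_polyAct_le (f : MvPolynomial (Fin n) ℚ) :
    (polyAct n M f).totalDegree ≤ f.totalDegree := by
  rw [← sum_polyAct_homogeneousComponent]
  refine (totalDegree_finsetSum _ _).trans (Finset.sup_le fun e he => ?_)
  exact (isHomogeneous_polyAct M (homogeneousComponent_isHomogeneous e f)).totalDegree_le.trans
    (Nat.lt_succ_iff.mp (Finset.mem_range.mp he))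

end PolyAct

section HarmonicMap

variable {n : ℕ} {Y : Set (Fin n → ℚ)}

lemma evalOn_polyAct (M : Matrix (Fin n) (Fin n) ℚ) {σ : Y → Y}
    (hσ : ∀ y, (σ y : Fin n → ℚ) = M *ᵥ y) (f : MvPolynomial (Fin n) ℚ) :
    evalOn Y (polyAct n M f) = LinearMap.funLeft ℚ ℚ σ (evalOn Y f) := by
  ext y
  simp [eval_polyAct, hσ]

lemma evalDegreeLT_mem_invtSubmodule (M : Matrix (Fin n) (Fin n) ℚ) {σ : Y → Y}
    (hσ : ∀ y, (σ y : Fin n → ℚ) = M *ᵥ y) (d : ℕ) :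
    evalDegreeLT Y d ∈ Module.End.invtSubmodule (LinearMap.funLeft ℚ ℚ σ) := by
  cases d with
  | zero => exact Module.End.invtSubmodule.bot_mem _
  | succ d =>
    intro v hv
    obtain ⟨f, hf, rfl⟩ := mem_evalDegreeLT_succ.mp hv
    rw [Submodule.mem_comap, ← evalOn_polyAct M hσ]
    exact mem_evalDegreeLT_succ.mpr ⟨_, (totalDegree_polyAct_le M f).trans hf, rfl⟩

variable [Fintype Y]

variable (Y) in
noncomputable def harmonicMap (D : ℕ) : MvPolynomial (Fin n) ℚ →ₗ[ℚ] (Y → ℚ) :=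
  ∑ d ∈ Finset.range D,
    gradedProj (evalDegreeLT Y) d ∘ₗ (evalOn Y).toLinearMap ∘ₗ homogeneousComponent d

lemma harmonicMap_apply (D : ℕ) (f : MvPolynomial (Fin n) ℚ) :
    harmonicMap Y D f = ∑ d ∈ Finset.range D,
      gradedProj (evalDegreeLT Y) d (evalOn Y (homogeneousComponent d f)) := by
  simp [harmonicMap]

lemma gradedProj_harmonicMap {D e : ℕ} (he : e < D) (f : MvPolynomial (Fin n) ℚ) :
    gradedProj (evalDegreeLT Y) e (harmonicMap Y D f) =
      gradedProj (evalDegreeLT Y) e (evalOn Y (homogeneousComponent e f)) := by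
  simp [harmonicMap_apply, gradedProj_gradedProj evalDegreeLT_mono, he]

lemma harmonicMap_eq_zero_iff {D : ℕ} (hD : evalDegreeLT Y D = ⊤) {f : MvPolynomial (Fin n) ℚ} :
    harmonicMap Y D f = 0 ↔ f ∈ topDegreeIdeal n Y := by
  constructor
  · intro h
    rw [← sum_homogeneousComponent f]
    refine sum_mem fun e _ =>
      mem_topDegreeIdeal_of_isHomogeneous (homogeneousComponent_isHomogeneous e f) ?_
    by_cases he : e < D
    · have h0 := gradedProj_harmonicMap (Y := Y) he f
      rw [h, map_zero] at h0
      simpa [← h0] using sub_gradedProj_mem (evalOn_homogeneousComponent_mem (Y := Y) f e)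
    · exact evalDegreeLT_mono (not_lt.mp he) (hD ▸ Submodule.mem_top)
  · intro h
    rw [harmonicMap_apply]
    exact Finset.sum_eq_zero fun d _ => gradedProj_eq_zero_of_mem evalDegreeLT_mono
      (evalOn_homogeneousComponent_mem_of_mem_topDegreeIdeal h d)

lemma harmonicMap_surjective {D : ℕ} (hD : evalDegreeLT Y D = ⊤) :
    Function.Surjective (harmonicMap Y D) := by
  suffices h : ∀ d ≤ D, evalDegreeLT Y d ≤ LinearMap.range (harmonicMap Y D) by
    rw [← LinearMap.range_eq_top, eq_top_iff, ← hD]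
    exact h D le_rfl
  intro d
  induction d with
  | zero => exact fun _ => bot_le
  | succ d ih =>
    intro hd v hv
    obtain ⟨f, hf, rfl⟩ := mem_evalDegreeLT_succ.mp hv
    have hlow : evalOn Y f - harmonicMap Y D f ∈ evalDegreeLT Y d := by
      nth_rewrite 1 [← sum_range_homogeneousComponent (show f.totalDegree < D by omega)]
      rw [harmonicMap_apply, map_sum, ← Finset.sum_sub_distrib]
      refine sum_mem fun e _ => ?_
      by_cases hed : e ≤ d
      · exact evalDegreeLT_mono hed (sub_gradedProj_mem (evalOn_homogeneousComponent_mem f e))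
      · simp [homogeneousComponent_eq_zero e f (by omega)]
    simpa using add_mem (ih (by omega) hlow) (LinearMap.mem_range_self _ f)

lemma harmonicMap_polyAct (g : Matrix.GeneralLinearGroup (Fin n) ℚ)
    (hg : ∀ y ∈ Y, (g : Matrix (Fin n) (Fin n) ℚ) *ᵥ y ∈ Y)
    (hg' : ∀ y ∈ Y, (↑g⁻¹ : Matrix (Fin n) (Fin n) ℚ) *ᵥ y ∈ Y)
    (D : ℕ) (f : MvPolynomial (Fin n) ℚ) (y : Y) :
    harmonicMap Y D (polyAct n g f) y =
      harmonicMap Y D f ⟨(g : Matrix (Fin n) (Fin n) ℚ) *ᵥ y, hg y y.2⟩ := by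
  let σ : Equiv.Perm Y :=
    { toFun y := ⟨(g : Matrix (Fin n) (Fin n) ℚ) *ᵥ y, hg y y.2⟩
      invFun y := ⟨(↑g⁻¹ : Matrix (Fin n) (Fin n) ℚ) *ᵥ y, hg' y y.2⟩
      left_inv y := Subtype.ext (by simp [Matrix.mulVec_mulVec])
      right_inv y := Subtype.ext (by simp [Matrix.mulVec_mulVec]) }
  have hcomm (d : ℕ) := commute_gradedProj_funLeft σ
    (evalDegreeLT_mem_invtSubmodule g (σ := σ) fun _ => rfl)
    (evalDegreeLT_mem_invtSubmodule (↑g⁻¹ : Matrix (Fin n) (Fin n) ℚ) (σ := σ.symm) fun _ => rfl) d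
  suffices harmonicMap Y D (polyAct n g f) = LinearMap.funLeft ℚ ℚ σ (harmonicMap Y D f) from
    congrFun this y
  simp only [harmonicMap_apply, map_sum, homogeneousComponent_polyAct,
    evalOn_polyAct g (σ := σ) (fun _ => rfl)]
  exact Finset.sum_congr rfl fun d _ => LinearMap.congr_fun (hcomm d).eq _

variable (Y) in
noncomputable def harmonicEquiv {D : ℕ} (hD : evalDegreeLT Y D = ⊤) :
    (MvPolynomial (Fin n) ℚ ⧸ topDegreeIdeal n Y) ≃ₗ[ℚ] (Y → ℚ) :=
  (Submodule.Quotient.restrictScalarsEquiv ℚ (topDegreeIdeal n Y)).symm ≪≫ₗ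
    Submodule.quotEquivOfEq _ _ (by ext f; exact (harmonicMap_eq_zero_iff hD).symm) ≪≫ₗ
    (harmonicMap Y D).quotKerEquivOfSurjective (harmonicMap_surjective hD)

lemma harmonicEquiv_mk {D : ℕ} (hD : evalDegreeLT Y D = ⊤) (f : MvPolynomial (Fin n) ℚ) :
    harmonicEquiv Y hD (Ideal.Quotient.mk _ f) = harmonicMap Y D f :=
  rfl

end HarmonicMap

/-- Orbit harmonics: if `Y ⊆ ℚⁿ` is a finite point set stable under a subgroup
`𝒢 ≤ GLₙ(ℚ)`, then `ℚ[x₁,…,xₙ]/T(Y)` is isomorphic, as an (ungraded)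
`𝒢`-module, to the permutation module `ℚ[Y]` (functions on `Y`, with `𝒢`
acting by permuting the points); in particular its dimension is `|Y|`.
The group acts on polynomials by linear substitution: `g · f = f ∘ g⁻¹`. -/
theorem orbit_harmonics_equivariant (n : ℕ)
    (𝒢 : Subgroup (Matrix.GeneralLinearGroup (Fin n) ℚ))
    (Y : Set (Fin n → ℚ)) (hY : Y.Finite)
    (hstab : ∀ g ∈ 𝒢, ∀ y ∈ Y,
      Matrix.mulVec (g : Matrix (Fin n) (Fin n) ℚ) y ∈ Y) :
    (∃ e : (MvPolynomial (Fin n) ℚ ⧸ topDegreeIdeal n Y) ≃ₗ[ℚ] (↥Y → ℚ),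
      ∀ g (hg : g ∈ 𝒢) (f : MvPolynomial (Fin n) ℚ) (y : ↥Y),
        e (Ideal.Quotient.mk _ (polyAct n (↑(g⁻¹) : Matrix (Fin n) (Fin n) ℚ) f)) y =
          e (Ideal.Quotient.mk _ f)
            ⟨Matrix.mulVec (↑(g⁻¹) : Matrix (Fin n) (Fin n) ℚ) ↑y,
              hstab g⁻¹ (inv_mem hg) ↑y y.2⟩) ∧
    Module.finrank ℚ (MvPolynomial (Fin n) ℚ ⧸ topDegreeIdeal n Y) =
      Y.ncard := by
  have := hY.fintype
  obtain ⟨D, hD⟩ := exists_evalDegreeLT_eq_top (Y := Y)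
  refine ⟨⟨harmonicEquiv Y hD, fun g hg f y => ?_⟩, ?_⟩
  · rw [harmonicEquiv_mk, harmonicEquiv_mk]
    exact harmonicMap_polyAct g⁻¹ (hstab g⁻¹ (inv_mem hg)) (by simpa using hstab g hg) D f y
  · rw [(harmonicEquiv Y hD).finrank_eq, Module.finrank_fintype_fun_eq_card,
      ← Nat.card_coe_set_eq, Nat.card_eq_fintype_card]
end
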